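/- arXiv:1908.03268 — 2 statements merged into one kernel-verified Lean document; each statement's English description precedes it below -/
import Mathlib

section
/- (Birkhoff–Kakutani metrization for locally paracompact groupoids) Let G be an open topological groupoid. For any open grey subset U : G → [0,1] and any unital open subset V ⊆ G which is Hausdorff and paracompact in the subspace topology with G⁰ ∩ V ⊆ {g : U(g) = 0}, there is an open strict grey subgroupoid W : G → [0,1] with W(g) ≥ U(g) for all g ∈ G and G⁰ ∩ {x : W(x) = 0} = G⁰ ∩ V. -/
open Set Topology

attribute [local instance] Classical.propDecidable

/-- A small groupoid, presented on its space of morphisms `G`, with objects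
identified with unit morphisms.  `comp g h` is only meaningful when
`src g = tgt h`; its values elsewhere are irrelevant junk. -/
structure Groupoidal (G : Type*) where
  src : G → G
  tgt : G → G
  comp : G → G → G
  inv : G → G
  src_src : ∀ g, src (src g) = src g
  tgt_of_src : ∀ g, tgt (src g) = src g
  src_of_tgt : ∀ g, src (tgt g) = tgt g
  tgt_tgt : ∀ g, tgt (tgt g) = tgt g
  comp_src : ∀ g, comp g (src g) = g
  tgt_comp_self : ∀ g, comp (tgt g) g = g
  src_comp : ∀ g h, src g = tgt h → src (comp g h) = src h
  tgt_comp : ∀ g h, src g = tgt h → tgt (comp g h) = tgt g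
  comp_assoc : ∀ g h k, src g = tgt h → src h = tgt k →
    comp (comp g h) k = comp g (comp h k)
  src_inv : ∀ g, src (inv g) = tgt g
  tgt_inv : ∀ g, tgt (inv g) = src g
  comp_inv_self : ∀ g, comp g (inv g) = tgt g
  inv_comp_self : ∀ g, comp (inv g) g = src g

namespace Groupoidal

variable {G : Type*} (S : Groupoidal G)

/-- The set of objects (= unit morphisms) of the groupoid. -/
def units : Set G := {x | S.src x = x}

/-- Two morphisms are composable when the source of the first matches the
target of the second. -/
def Composable (g h : G) : Prop := S.src g = S.tgt h

/-- Pointwise product of two subsets of a groupoid. -/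
def setMul (A B : Set G) : Set G :=
  {k | ∃ g ∈ A, ∃ h ∈ B, S.Composable g h ∧ k = S.comp g h}

/-- Pointwise inverse of a subset of a groupoid. -/
def setInv (A : Set G) : Set G := S.inv '' A

def IsSymmetric (A : Set G) : Prop := S.setInv A = A

def IsUnital (A : Set G) : Prop := S.src '' A ⊆ A ∧ S.tgt '' A ⊆ A

/-- A subgroupoid: a subset closed under inverse and multiplication. -/
def IsSubgroupoid (A : Set G) : Prop := S.IsSymmetric A ∧ S.setMul A A ⊆ A

/-- A topological groupoid: all structure maps are continuous (multiplication
on the subspace of composable pairs). -/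
structure IsTopological [TopologicalSpace G] : Prop where
  continuous_src : Continuous S.src
  continuous_tgt : Continuous S.tgt
  continuous_inv : Continuous S.inv
  continuous_comp :
    Continuous fun p : {p : G × G // S.Composable p.1 p.2} => S.comp p.1.1 p.1.2

/-- An open topological groupoid: the source map is open. -/
def IsOpenGroupoid [TopologicalSpace G] : Prop := IsOpenMap S.src

/-- A non-Archimedean topological groupoid: every unit morphism has a
neighborhood basis of open subgroupoids. -/
def IsNonArchimedean [TopologicalSpace G] : Prop :=
  ∀ x ∈ S.units, ∀ W ∈ nhds x, ∃ U : Set G,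
    IsOpen U ∧ x ∈ U ∧ U ⊆ W ∧ S.IsSubgroupoid U

/-- A standard Borel groupoid structure: all structure maps are Borel. -/
structure IsBorelGroupoid [MeasurableSpace G] : Prop where
  measurable_src : Measurable S.src
  measurable_tgt : Measurable S.tgt
  measurable_inv : Measurable S.inv
  measurable_comp :
    Measurable fun p : {p : G × G // S.Composable p.1 p.2} => S.comp p.1.1 p.1.2

end Groupoidal

/-- A `Π⁰₂` subset of a topological space: a countable intersection of sets
of the form (closed ∪ open). -/
def IsPi02 {X : Type*} [TopologicalSpace X] (A : Set X) : Prop :=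
  ∃ C O : ℕ → Set X, (∀ n, IsClosed (C n)) ∧ (∀ n, IsOpen (O n)) ∧
    A = ⋂ n, C n ∪ O n

/-- A quasi-Polish space: homeomorphic to a `Π⁰₂` subspace of `𝕊^ℕ`, where
`𝕊 = Prop` is the Sierpiński space. -/
def IsQuasiPolish (X : Type*) [TopologicalSpace X] : Prop :=
  ∃ A : Set (ℕ → Prop), IsPi02 A ∧ Nonempty (X ≃ₜ ↥A)

/-- A σ-locally Polish space: a countable cover by open Polish subspaces. -/
def IsSigmaLocallyPolish (X : Type*) [TopologicalSpace X] : Prop :=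
  ∃ V : ℕ → Set X, (∀ n, IsOpen (V n)) ∧ (∀ n, PolishSpace (V n)) ∧
    (⋃ n, V n) = Set.univ

/-- A functor between groupoids presented on their spaces of morphisms. -/
structure GFunctor {G H : Type*} (S : Groupoidal G) (T : Groupoidal H) where
  toFun : G → H
  map_src : ∀ g, toFun (S.src g) = T.src (toFun g)
  map_tgt : ∀ g, toFun (S.tgt g) = T.tgt (toFun g)
  map_comp : ∀ g h, S.Composable g h →
    toFun (S.comp g h) = T.comp (toFun g) (toFun h)

namespace GFunctor

variable {G H K : Type*} {S : Groupoidal G} {T : Groupoidal H} {R : Groupoidal K}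

/-- The identity functor. -/
def id (S : Groupoidal G) : GFunctor S S :=
  ⟨fun g => g, fun _ => rfl, fun _ => rfl, fun _ _ _ => rfl⟩

/-- Composition of functors. -/
def comp (F₂ : GFunctor T R) (F₁ : GFunctor S T) : GFunctor S R where
  toFun := F₂.toFun ∘ F₁.toFun
  map_src g := by simp only [Function.comp_apply, F₁.map_src, F₂.map_src]
  map_tgt g := by simp only [Function.comp_apply, F₁.map_tgt, F₂.map_tgt]
  map_comp g h hc := by
    have hc' : T.Composable (F₁.toFun g) (F₁.toFun h) := by
      unfold Groupoidal.Composable at hc ⊢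
      rw [← F₁.map_src, ← F₁.map_tgt, hc]
    simp only [Function.comp_apply, F₁.map_comp g h hc, F₂.map_comp _ _ hc']

/-- A functor is full if it is surjective on each hom-set. -/
def Full (F : GFunctor S T) : Prop :=
  ∀ x ∈ S.units, ∀ y ∈ S.units, ∀ k : H,
    T.src k = F.toFun x → T.tgt k = F.toFun y →
      ∃ g : G, S.src g = x ∧ S.tgt g = y ∧ F.toFun g = k

/-- A functor is faithful if it is injective on each hom-set. -/
def Faithful (F : GFunctor S T) : Prop :=
  ∀ g g' : G, S.src g = S.src g' → S.tgt g = S.tgt g' →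
    F.toFun g = F.toFun g' → g = g'

end GFunctor

/-- A natural transformation (automatically an isomorphism, between functors
of groupoids); `app` is only meaningful on unit morphisms. -/
structure GNatIso {G H : Type*} {S : Groupoidal G} {T : Groupoidal H}
    (F F' : GFunctor S T) where
  app : G → H
  app_src : ∀ x ∈ S.units, T.src (app x) = F.toFun x
  app_tgt : ∀ x ∈ S.units, T.tgt (app x) = F'.toFun x
  naturality : ∀ g : G,
    T.comp (app (S.tgt g)) (F.toFun g) = T.comp (F'.toFun g) (app (S.src g))

/-- A Borel functor which is an equivalence of groupoids witnessed by a Borel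
inverse functor and Borel natural isomorphisms. -/
def IsBorelEquivalence {G H : Type*} [MeasurableSpace G] [MeasurableSpace H]
    {S : Groupoidal G} {T : Groupoidal H} (F : GFunctor S T) : Prop :=
  Measurable F.toFun ∧
  ∃ F' : GFunctor T S, Measurable F'.toFun ∧
    (∃ α : GNatIso (F.comp F') (GFunctor.id T), Measurable α.app) ∧
    (∃ β : GNatIso (F'.comp F) (GFunctor.id S), Measurable β.app)

/-- A grey subset of a topological space is open if all of its strict sublevel
sets are open. -/
def GreyOpen {X : Type*} [TopologicalSpace X] (U : X → ℝ) : Prop :=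
  ∀ r : ℝ, IsOpen {x | U x < r}

/-- A strict grey subgroupoid: `{0,1}`-valued on units, strictly unital,
symmetric, and subadditive under composition. -/
def Groupoidal.IsStrictGreySubgroupoid {G : Type*} (S : Groupoidal G)
    (W : G → ℝ) : Prop :=
  (∀ g, W g ∈ Set.Icc (0 : ℝ) 1) ∧
  (∀ x ∈ S.units, W x = 0 ∨ W x = 1) ∧
  (∀ g, W g < 1 → W (S.src g) = 0 ∧ W (S.tgt g) = 0) ∧
  (∀ g, W (S.inv g) = W g) ∧
  (∀ g h, S.Composable g h → W (S.comp g h) ≤ min 1 (W g + W h))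

/-!
The Birkhoff–Kakutani construction, run inside the groupoid. Paracompactness of `V`, through a
barycentric refinement, together with openness of the source map yields open sets
`Z n ⊇ S.units ∩ V` with sources and targets in `V`, with `U < 2⁻¹ ^ (n + 1)` on `Z n`, and with
`Z (n + 1) · Z (n + 1) · Z (n + 1) ⊆ Z n`. The gauge `f g = inf {2⁻¹ ^ n | g ∈ Z n}` is upper
semicontinuous, so the infimum `d` of the `f`-lengths of composable chains with product `g` is an
upper semicontinuous subadditive length, and the chain lemma gives `d g < 2⁻¹ ^ n → g ∈ Z n`.
This pins down the zero set of `d` on units and forces `U ≤ d`; truncating `d` at `1` and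
symmetrizing under inversion gives `W`.
-/

theorem exists_barycentric_refinement {X ι : Type*} [TopologicalSpace X] [ParacompactSpace X]
    [T2Space X] (u : ι → Set X) (uo : ∀ i, IsOpen (u i)) (uc : ⋃ i, u i = univ) :
    ∃ v : X → Set X, (∀ y, IsOpen (v y)) ∧ (∀ y, y ∈ v y) ∧
      ∀ x, ∃ i, ∀ y, x ∈ v y → v y ⊆ u i := by
  obtain ⟨w, wo, wc, wlf, wsub⟩ := precise_refinement u uo uc
  obtain ⟨t, tc, -, tcl⟩ := exists_subset_iUnion_closure_subset isClosed_univ wo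
    (fun x _ => wlf.point_finite x) (by rw [wc])
  have tclf : LocallyFinite fun i => closure (t i) :=
    (wlf.subset fun i => subset_closure.trans (tcl i)).closure
  have hN : ∀ y, ∃ N, IsOpen N ∧ y ∈ N ∧ {i | (closure (t i) ∩ N).Nonempty}.Finite := by
    intro y
    obtain ⟨N, hNy, hNfin⟩ := tclf y
    exact ⟨interior N, isOpen_interior, mem_interior_iff_mem_nhds.2 hNy,
      hNfin.subset fun i hi => hi.mono (inter_subset_inter_right _ interior_subset)⟩
  choose N Nopen Nmem Nfin using hN
  -- `v y` lies in every `w i` whose shrunk closure contains `y`, and avoids the other shrunk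
  -- closures that meet `N y`; so if `x ∈ t i ∩ v y`, then `y ∈ closure (t i)` and `v y ⊆ w i`.
  refine ⟨fun y => N y ∩ (⋂ i ∈ {i | y ∈ closure (t i)}, w i) ∩
      ⋂ i ∈ {i | (closure (t i) ∩ N y).Nonempty ∧ y ∉ closure (t i)}, (closure (t i))ᶜ,
    fun y => ?_, fun y => ⟨⟨Nmem y, mem_iInter₂.2 fun i hi => tcl i hi⟩,
      mem_iInter₂.2 fun i hi => hi.2⟩, fun x => ?_⟩
  · refine ((Nopen y).inter (((Nfin y).subset fun i hi => ⟨y, hi, Nmem y⟩).isOpen_biInter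
      fun i _ => wo i)).inter (((Nfin y).subset fun i hi => hi.1).isOpen_biInter
      fun i _ => isClosed_closure.isOpen_compl)
  · obtain ⟨i, hxi⟩ := mem_iUnion.1 (tc (mem_univ x))
    refine ⟨i, fun y hxy => ?_⟩
    have hyi : y ∈ closure (t i) := by
      by_contra hy
      exact mem_iInter₂.1 hxy.2 i ⟨⟨x, subset_closure hxi, hxy.1.1⟩, hy⟩ (subset_closure hxi)
    exact fun z hz => wsub i (mem_iInter₂.1 hz.1.2 i hyi)

theorem List.exists_eq_append_cons_sum_le {α : Type*} (f : α → ℝ) {l : List α} (hl : l ≠ [])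
    {b : ℝ} (hb₀ : 0 ≤ b) (hb : b ≤ (l.map f).sum) :
    ∃ l₁ x l₂, l = l₁ ++ x :: l₂ ∧ (l₁.map f).sum ≤ b ∧ (l₂.map f).sum ≤ (l.map f).sum - b := by
  induction l generalizing b with
  | nil => exact absurd rfl hl
  | cons a t ih =>
    simp only [List.map_cons, List.sum_cons] at hb ⊢
    by_cases hab : b ≤ f a
    · exact ⟨[], a, t, rfl, by simpa using hb₀, by linarith⟩
    · obtain ⟨l₁, x, l₂, rfl, h₁, h₂⟩ := ih (b := b - f a)
        (by rintro rfl; simp at hb; linarith) (by linarith) (by linarith)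
      exact ⟨a :: l₁, x, l₂, rfl, by simp only [List.map_cons, List.sum_cons]; linarith,
        by linarith⟩

theorem greyOpen_iff_upperSemicontinuous {X : Type*} [TopologicalSpace X] {U : X → ℝ} :
    GreyOpen U ↔ UpperSemicontinuous U :=
  upperSemicontinuous_iff_isOpen_preimage.symm

theorem min_one_add_le {a b : ℝ} (ha : 0 ≤ a) (hb : 0 ≤ b) :
    min 1 (a + b) ≤ min 1 (min 1 a + min 1 b) := by
  simp only [min_def]
  split_ifs <;> linarith

/-- If `a < b`, induction on `n` gives `b ≤ 2⁻¹ ^ n` for every `n`. -/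
theorem le_of_forall_lt_two_inv_pow {a b : ℝ} (ha : 0 ≤ a) (hb : b ≤ 1)
    (h : ∀ n : ℕ, a < (2⁻¹ : ℝ) ^ n → b < (2⁻¹ : ℝ) ^ (n + 1)) : b ≤ a := by
  by_contra! hab
  have hpow : ∀ n : ℕ, b ≤ (2⁻¹ : ℝ) ^ n := by
    intro n
    induction n with
    | zero => simpa using hb
    | succ n ih => exact (h n (hab.trans_le ih)).le
  have := ge_of_tendsto' (tendsto_pow_atTop_nhds_zero_of_lt_one (r := (2⁻¹ : ℝ)) (by norm_num)
    (by norm_num)) hpow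
  linarith

noncomputable def dyadicGauge {X : Type*} (Z : ℕ → Set X) (x : X) : ℝ :=
  ⨅ n, if x ∈ Z n then (2⁻¹ : ℝ) ^ n else 1

section DyadicGauge

variable {X : Type*} {Z : ℕ → Set X}

theorem dyadicGauge_term_nonneg (x : X) (n : ℕ) :
    0 ≤ if x ∈ Z n then (2⁻¹ : ℝ) ^ n else 1 := by
  split_ifs <;> positivity

theorem dyadicGauge_nonneg (x : X) : 0 ≤ dyadicGauge Z x :=
  le_ciInf (dyadicGauge_term_nonneg x)

theorem dyadicGauge_le {x : X} {n : ℕ} (hx : x ∈ Z n) : dyadicGauge Z x ≤ (2⁻¹ : ℝ) ^ n :=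
  (ciInf_le ⟨0, by rintro _ ⟨m, rfl⟩; exact dyadicGauge_term_nonneg x m⟩ n).trans_eq (if_pos hx)

theorem mem_of_dyadicGauge_lt (hZ : Antitone Z) {x : X} {n : ℕ}
    (hx : dyadicGauge Z x < (2⁻¹ : ℝ) ^ n) : x ∈ Z (n + 1) := by
  obtain ⟨m, hm⟩ := exists_lt_of_ciInf_lt hx
  split_ifs at hm with hxm
  · exact hZ ((pow_lt_pow_iff_right_of_lt_one₀ (by norm_num) (by norm_num)).1 hm) hxm
  · exact absurd hm (not_lt.2 (pow_le_one₀ (by norm_num) (by norm_num)))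

theorem upperSemicontinuous_dyadicGauge [TopologicalSpace X] (hZ : ∀ n, IsOpen (Z n)) :
    UpperSemicontinuous (dyadicGauge Z) := by
  refine upperSemicontinuous_ciInf
    (fun x => ⟨0, by rintro _ ⟨m, rfl⟩; exact dyadicGauge_term_nonneg x m⟩) fun n x r hr => ?_
  dsimp only at hr ⊢
  split_ifs at hr with hx
  · filter_upwards [(hZ n).mem_nhds hx] with y hy
    rwa [if_pos hy]
  · refine Filter.Eventually.of_forall fun y => ?_
    split_ifs
    exacts [(pow_le_one₀ (by norm_num) (by norm_num)).trans_lt hr, hr]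

end DyadicGauge

namespace Groupoidal

variable {G : Type*} (S : Groupoidal G)

theorem tgt_eq_self_of_mem_units {x : G} (hx : x ∈ S.units) : S.tgt x = x := by
  simpa [show S.src x = x from hx] using S.tgt_of_src x

theorem inv_eq_self_of_mem_units {x : G} (hx : x ∈ S.units) : S.inv x = x := by
  calc S.inv x = S.comp (S.inv x) (S.src (S.inv x)) := (S.comp_src _).symm
    _ = S.comp (S.inv x) x := by rw [S.src_inv, S.tgt_eq_self_of_mem_units hx]
    _ = x := by rw [S.inv_comp_self]; exact hx

theorem composable_src (g : G) : S.Composable g (S.src g) := (S.tgt_of_src g).symm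

theorem composable_tgt (g : G) : S.Composable (S.tgt g) g := S.src_of_tgt g

theorem composable_src_src (g : G) : S.Composable (S.src g) (S.src g) :=
  (S.src_src g).trans (S.tgt_of_src g).symm

theorem comp_src_src (g : G) : S.comp (S.src g) (S.src g) = S.src g := by
  nth_rewrite 2 [← S.src_src g]
  exact S.comp_src _

theorem composable_inv {g h : G} (hgh : S.src g = S.src h) : S.Composable g (S.inv h) :=
  hgh.trans (S.tgt_inv h).symm

theorem composable_comp_inv {g h : G} (hgh : S.src g = S.src h) :
    S.Composable (S.comp g (S.inv h)) h :=
  (S.src_comp _ _ (S.composable_inv hgh)).trans (S.src_inv h)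

theorem comp_inv_comp_cancel {g h : G} (hgh : S.src g = S.src h) :
    S.comp (S.comp g (S.inv h)) h = g := by
  rw [S.comp_assoc _ _ _ (S.composable_inv hgh) (S.src_inv h), S.inv_comp_self, ← hgh,
    S.comp_src]

theorem comp_comp_inv_cancel {g h : G} (hc : S.Composable g h) :
    S.comp (S.comp g h) (S.inv h) = g := by
  rw [S.comp_assoc _ _ _ hc (S.tgt_inv h).symm, S.comp_inv_self, ← hc, S.comp_src]

theorem inv_inv (g : G) : S.inv (S.inv g) = g := by
  have h := S.comp_inv_comp_cancel (g := S.inv (S.inv g)) (h := g) (by rw [S.src_inv, S.tgt_inv])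
  rw [S.inv_comp_self, S.src_inv, S.tgt_comp_self] at h
  exact h.symm

theorem inv_involutive : Function.Involutive S.inv := S.inv_inv

theorem eq_inv_of_comp_eq_src {g h : G} (hc : S.Composable h g) (hhg : S.comp h g = S.src g) :
    h = S.inv g := by
  calc h = S.comp (S.comp h g) (S.inv g) := (S.comp_comp_inv_cancel hc).symm
    _ = S.inv g := by rw [hhg, ← S.tgt_inv, S.tgt_comp_self]

theorem inv_comp {g h : G} (hc : S.Composable g h) :
    S.inv (S.comp g h) = S.comp (S.inv h) (S.inv g) := by
  have hc' : S.Composable (S.inv h) (S.inv g) := by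
    rw [Composable, S.src_inv, S.tgt_inv, hc]
  refine (S.eq_inv_of_comp_eq_src (by rw [Composable, S.src_comp _ _ hc', S.src_inv,
    S.tgt_comp _ _ hc]) ?_).symm
  rw [S.comp_assoc _ _ _ hc' (by rw [S.src_inv, S.tgt_comp _ _ hc]),
    ← S.comp_assoc _ _ _ (S.src_inv g) hc, S.inv_comp_self, hc, S.tgt_comp_self,
    S.inv_comp_self, S.src_comp _ _ hc]

theorem mem_setMul {A B : Set G} {g h : G} (hg : g ∈ A) (hh : h ∈ B) (hc : S.Composable g h) :
    S.comp g h ∈ S.setMul A B :=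
  ⟨g, hg, h, hh, hc, rfl⟩

theorem setMul_mono {A A' B B' : Set G} (hA : A ⊆ A') (hB : B ⊆ B') :
    S.setMul A B ⊆ S.setMul A' B' := by
  rintro _ ⟨g, hg, h, hh, hc, rfl⟩
  exact S.mem_setMul (hA hg) (hB hh) hc

theorem subset_setMul_of_src_subset {A B : Set G} (h : S.src '' A ⊆ B) : A ⊆ S.setMul A B :=
  fun g hg => S.comp_src g ▸ S.mem_setMul hg (h ⟨g, hg, rfl⟩) (S.composable_src g)

theorem isUnital_of_units_inter_subset {V Z : Set G} (hVZ : S.units ∩ V ⊆ Z)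
    (hZV : ∀ g ∈ Z, S.src g ∈ V ∧ S.tgt g ∈ V) : S.IsUnital Z :=
  ⟨by rintro _ ⟨g, hg, rfl⟩; exact hVZ ⟨S.src_src g, (hZV g hg).1⟩,
    by rintro _ ⟨g, hg, rfl⟩; exact hVZ ⟨S.src_of_tgt g, (hZV g hg).2⟩⟩

theorem src_mem_and_tgt_mem_of_mem_setMul_setInv {A B : Set G} (hAB : S.src '' A ⊆ B) {g : G}
    (hg : g ∈ S.setMul (S.setInv A) A) : S.src g ∈ B ∧ S.tgt g ∈ B := by
  obtain ⟨_, ⟨a, ha, rfl⟩, b, hb, hc, rfl⟩ := hg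
  rw [S.src_comp _ _ hc, S.tgt_comp _ _ hc, S.tgt_inv]
  exact ⟨hAB ⟨b, hb, rfl⟩, hAB ⟨a, ha, rfl⟩⟩

end Groupoidal

namespace Groupoidal

variable {G : Type*} [TopologicalSpace G] (S : Groupoidal G)

theorem exists_isOpen_setMul_subset (hTop : S.IsTopological) {g h : G} (hc : S.Composable g h)
    {O : Set G} (hO : IsOpen O) (hgh : S.comp g h ∈ O) :
    ∃ N₁ N₂ : Set G, IsOpen N₁ ∧ IsOpen N₂ ∧ g ∈ N₁ ∧ h ∈ N₂ ∧ S.setMul N₁ N₂ ⊆ O := by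
  obtain ⟨t, ht, hteq⟩ := isOpen_induced_iff.1 (hO.preimage hTop.continuous_comp)
  have hght : (g, h) ∈ t := by
    change (⟨(g, h), hc⟩ : {p : G × G // S.Composable p.1 p.2}) ∈ Subtype.val ⁻¹' t
    rw [hteq]; exact hgh
  obtain ⟨N₁, N₂, hN₁, hN₂, hg, hh, hsub⟩ := isOpen_prod_iff.1 ht g h hght
  refine ⟨N₁, N₂, hN₁, hN₂, hg, hh, ?_⟩
  rintro _ ⟨a, ha, b, hb, hab, rfl⟩
  have : (⟨(a, b), hab⟩ : {p : G × G // S.Composable p.1 p.2}) ∈ Subtype.val ⁻¹' t :=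
    hsub (mk_mem_prod ha hb)
  rw [hteq] at this; exact this

theorem isOpen_setInv (hTop : S.IsTopological) {A : Set G} (hA : IsOpen A) :
    IsOpen (S.setInv A) := by
  rw [setInv, S.inv_involutive.image_eq_preimage_symm]
  exact hA.preimage hTop.continuous_inv

theorem isOpen_setMul (hTop : S.IsTopological) (hOpen : IsOpenMap S.src) {A B : Set G}
    (hA : IsOpen A) (hB : IsOpen B) : IsOpen (S.setMul A B) := by
  refine isOpen_iff_forall_mem_open.2 ?_
  rintro _ ⟨g, hg, h, hh, hc, rfl⟩
  have hsrc : S.src (S.comp g h) = S.src h := S.src_comp _ _ hc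
  obtain ⟨N₁, N₂, hN₁, hN₂, hghN, hhN, hN⟩ := S.exists_isOpen_setMul_subset hTop
    (S.composable_inv hsrc) hA
    (by rwa [S.comp_comp_inv_cancel hc])
  refine ⟨N₁ ∩ S.src ⁻¹' (S.src '' (S.inv ⁻¹' N₂ ∩ B)), ?_,
    (hN₁.inter ((hOpen _ ((hN₂.preimage hTop.continuous_inv).inter hB)).preimage
      hTop.continuous_src)), hghN, h, ⟨hhN, hh⟩, hsrc.symm⟩
  rintro k ⟨hk, h', ⟨hh'N, hh'B⟩, hkh'⟩
  rw [← S.comp_inv_comp_cancel hkh'.symm]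
  exact S.mem_setMul (hN (S.mem_setMul hk hh'N (S.composable_inv hkh'.symm))) hh'B
    (S.composable_comp_inv hkh'.symm)

theorem exists_isOpen_mem_setMul_setInv_subset (hTop : S.IsTopological) {O : Set G}
    (hO : IsOpen O) {v : G} (hv : S.src v ∈ O) :
    ∃ P : Set G, IsOpen P ∧ v ∈ P ∧
      S.setMul (S.setMul (S.setInv P) P) (S.setMul (S.setInv P) P) ⊆ O := by
  obtain ⟨N₃, N₄, hN₃, hN₄, hv₃, hv₄, hN₃₄⟩ :=
    S.exists_isOpen_setMul_subset hTop (S.composable_src_src v) hO (by rwa [S.comp_src_src])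
  obtain ⟨N₁, N₂, hN₁, hN₂, hv₁, hv₂, hN₁₂⟩ :=
    S.exists_isOpen_setMul_subset hTop (S.src_inv v) (hN₃.inter hN₄)
      (by rw [S.inv_comp_self]; exact ⟨hv₃, hv₄⟩)
  refine ⟨S.inv ⁻¹' N₁ ∩ N₂, (hN₁.preimage hTop.continuous_inv).inter hN₂,
    ⟨hv₁, hv₂⟩, ?_⟩
  have hP : S.setMul (S.setInv (S.inv ⁻¹' N₁ ∩ N₂)) (S.inv ⁻¹' N₁ ∩ N₂) ⊆ N₃ ∩ N₄ :=
    (S.setMul_mono ((image_mono inter_subset_left).trans (image_preimage_subset _ _))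
      inter_subset_right).trans hN₁₂
  exact (S.setMul_mono (hP.trans inter_subset_left) (hP.trans inter_subset_right)).trans hN₃₄

/-- `Z` is the union of the sets `C⁻¹ C` for `C` running through (a shrinking of) a barycentric
refinement of the cover of `V` by open sets `P` with `(P⁻¹ P)(P⁻¹ P) ⊆ O`: two composable elements
of `Z` meet at a point of `V` whose star lies in a single such `P`. -/
theorem exists_isOpen_setMul_self_subset (hTop : S.IsTopological) (hOpen : IsOpenMap S.src)
    {V : Set G} (hVopen : IsOpen V) (hVunital : S.IsUnital V) [T2Space V] [ParacompactSpace V]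
    {O : Set G} (hO : IsOpen O) (hVO : S.units ∩ V ⊆ O) :
    ∃ Z : Set G, IsOpen Z ∧ S.units ∩ V ⊆ Z ∧ (∀ g ∈ Z, S.src g ∈ V ∧ S.tgt g ∈ V) ∧
      S.setMul Z Z ⊆ O := by
  let ι := {P : Set G // IsOpen P ∧
    S.setMul (S.setMul (S.setInv P) P) (S.setMul (S.setInv P) P) ⊆ O}
  obtain ⟨v, hv_open, hv_mem, hv_star⟩ := exists_barycentric_refinement
    (fun i : ι => (Subtype.val ⁻¹' i.1 : Set V)) (fun i => i.2.1.preimage continuous_subtype_val)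
    (iUnion_eq_univ_iff.2 fun x => by
      obtain ⟨P, hP, hxP, hPO⟩ := S.exists_isOpen_mem_setMul_setInv_subset hTop hO
        (hVO ⟨S.src_src x, hVunital.1 ⟨x, x.2, rfl⟩⟩)
      exact ⟨⟨P, hP, hPO⟩, hxP⟩)
  let B : V → Set G := fun y => Subtype.val '' v y
  have hBV : ∀ y, B y ⊆ V := fun y => Subtype.coe_image_subset _ _
  let C : V → Set G := fun y => B y ∩ S.src ⁻¹' B y
  have hC : ∀ y, S.src '' C y ⊆ B y := fun y => by rintro _ ⟨g, hg, rfl⟩; exact hg.2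
  refine ⟨⋃ y, S.setMul (S.setInv (C y)) (C y), isOpen_iUnion fun y => ?_, ?_, ?_, ?_⟩
  · have hB : IsOpen (B y) := hVopen.isOpenMap_subtype_val _ (hv_open y)
    have hC : IsOpen (C y) := hB.inter (hB.preimage hTop.continuous_src)
    exact S.isOpen_setMul hTop hOpen (S.isOpen_setInv hTop hC) hC
  · rintro x ⟨hx, hxV⟩
    have hxB : x ∈ B ⟨x, hxV⟩ := ⟨_, hv_mem _, rfl⟩
    have hxC : x ∈ C ⟨x, hxV⟩ := ⟨hxB, by rw [mem_preimage, show S.src x = x from hx]; exact hxB⟩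
    refine mem_iUnion.2 ⟨⟨x, hxV⟩, ?_⟩
    have := S.mem_setMul (A := S.setInv (C _)) ⟨x, hxC, rfl⟩ hxC (S.src_inv x)
    rwa [S.inv_comp_self, hx] at this
  · intro g hg
    obtain ⟨y, hy⟩ := mem_iUnion.1 hg
    exact (S.src_mem_and_tgt_mem_of_mem_setMul_setInv (hC y) hy).imp (@hBV y _) (@hBV y _)
  · rintro _ ⟨g, hg, h, hh, hgh, rfl⟩
    obtain ⟨y₁, hy₁⟩ := mem_iUnion.1 hg
    obtain ⟨y₂, hy₂⟩ := mem_iUnion.1 hh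
    have hz₁ := (S.src_mem_and_tgt_mem_of_mem_setMul_setInv (hC y₁) hy₁).1
    have hz₂ := (S.src_mem_and_tgt_mem_of_mem_setMul_setInv (hC y₂) hy₂).2
    rw [← hgh] at hz₂
    obtain ⟨i, hi⟩ := hv_star ⟨S.src g, hBV y₁ hz₁⟩
    have hCi : ∀ y, S.src g ∈ B y → C y ⊆ i.1 := by
      rintro y ⟨z, hz, hzg⟩ _ ⟨⟨w, hw, rfl⟩, -⟩
      obtain rfl : z = ⟨S.src g, hBV y₁ hz₁⟩ := Subtype.ext hzg
      exact hi y hz hw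
    exact i.2.2 (S.mem_setMul
      (S.setMul_mono (image_mono (hCi y₁ hz₁)) (hCi y₁ hz₁) hy₁)
      (S.setMul_mono (image_mono (hCi y₂ hz₂)) (hCi y₂ hz₂) hy₂) hgh)

end Groupoidal

namespace Groupoidal

variable {G : Type*} (S : Groupoidal G)

inductive IsChainProd : List G → G → Prop
  | single (a : G) : IsChainProd [a] a
  | cons {a g : G} {l : List G} :
      S.Composable a g → IsChainProd l g → IsChainProd (a :: l) (S.comp a g)

/-- The largest subadditive function below `f`. -/
noncomputable def chainInf (f : G → ℝ) (g : G) : ℝ :=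
  sInf ((fun l : List G => (l.map f).sum) '' {l | S.IsChainProd l g})

variable {S}

theorem isChainProd_cons_iff {a k : G} {l : List G} :
    S.IsChainProd (a :: l) k ↔
      l = [] ∧ k = a ∨ ∃ g, S.Composable a g ∧ S.IsChainProd l g ∧ k = S.comp a g := by
  constructor
  · rintro (_ | ⟨hc, hg⟩)
    exacts [Or.inl ⟨rfl, rfl⟩, Or.inr ⟨_, hc, hg, rfl⟩]
  · rintro (⟨rfl, rfl⟩ | ⟨g, hc, hg, rfl⟩)
    exacts [.single _, .cons hc hg]

theorem IsChainProd.ne_nil {l : List G} {g : G} (h : S.IsChainProd l g) : l ≠ [] := by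
  cases h <;> simp

theorem IsChainProd.append {l₁ l₂ : List G} {g h : G} (hg : S.IsChainProd l₁ g)
    (hh : S.IsChainProd l₂ h) (hc : S.Composable g h) :
    S.IsChainProd (l₁ ++ l₂) (S.comp g h) := by
  induction hg with
  | single a => exact .cons hc hh
  | @cons a g' l hag' _ ih =>
    have hg'h : S.Composable g' h := (S.src_comp _ _ hag').symm.trans hc
    rw [S.comp_assoc _ _ _ hag' hg'h]
    exact .cons (hag'.trans (S.tgt_comp _ _ hg'h).symm) (ih hg'h)

theorem IsChainProd.exists_of_cons {x k : G} {l : List G} (h : S.IsChainProd (x :: l) k) :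
    ∃ b, (b = S.src x ∨ S.IsChainProd l b) ∧ S.Composable x b ∧ k = S.comp x b := by
  rcases isChainProd_cons_iff.1 h with ⟨-, rfl⟩ | ⟨b, hxb, hb, rfl⟩
  exacts [⟨_, Or.inl rfl, S.composable_src k, (S.comp_src k).symm⟩, ⟨b, Or.inr hb, hxb, rfl⟩]

theorem IsChainProd.exists_of_append {l₁ l₂ : List G} {k : G} (hk : S.IsChainProd (l₁ ++ l₂) k)
    (hl₂ : l₂ ≠ []) :
    ∃ g p, (l₁ = [] ∧ g = S.tgt p ∨ S.IsChainProd l₁ g) ∧ S.IsChainProd l₂ p ∧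
      S.Composable g p ∧ k = S.comp g p := by
  induction l₁ generalizing k with
  | nil => exact ⟨_, k, Or.inl ⟨rfl, rfl⟩, hk, S.composable_tgt k, (S.tgt_comp_self k).symm⟩
  | cons c l₁ ih =>
    rcases isChainProd_cons_iff.1 hk with ⟨h, -⟩ | ⟨k', hck', hk', rfl⟩
    · exact absurd (List.append_eq_nil_iff.1 h).2 hl₂
    obtain ⟨g, p, hg | hg, hp, hgp, rfl⟩ := ih hk'
    · obtain ⟨rfl, rfl⟩ := hg
      rw [S.tgt_comp_self] at hck' ⊢
      exact ⟨c, p, Or.inr (.single c), hp, hck', rfl⟩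
    · have hcg : S.Composable c g := hck'.trans (S.tgt_comp _ _ hgp)
      exact ⟨S.comp c g, p, Or.inr (.cons hcg hg), hp,
        (S.src_comp _ _ hcg).trans hgp, (S.comp_assoc _ _ _ hcg hgp).symm⟩

variable {f : G → ℝ}

theorem chainInf_le (hf : ∀ g, 0 ≤ f g) {l : List G} {g : G} (hl : S.IsChainProd l g) :
    S.chainInf f g ≤ (l.map f).sum :=
  csInf_le ⟨0, by rintro _ ⟨l, -, rfl⟩; exact List.sum_nonneg (by simpa using fun a _ => hf a)⟩
    ⟨l, hl, rfl⟩

theorem chainInf_nonneg (hf : ∀ g, 0 ≤ f g) (g : G) : 0 ≤ S.chainInf f g :=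
  Real.sInf_nonneg (by rintro _ ⟨l, -, rfl⟩; exact List.sum_nonneg (by simpa using fun a _ => hf a))

theorem chainInf_le_self (hf : ∀ g, 0 ≤ f g) (g : G) : S.chainInf f g ≤ f g := by
  simpa using chainInf_le hf (.single (S := S) g)

theorem exists_isChainProd_of_chainInf_lt {g : G} {r : ℝ} (h : S.chainInf f g < r) :
    ∃ l, S.IsChainProd l g ∧ (l.map f).sum < r := by
  obtain ⟨_, ⟨l, hl, rfl⟩, hlr⟩ := exists_lt_of_csInf_lt (Set.image_nonempty.2 ⟨[g], .single g⟩) h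
  exact ⟨l, hl, hlr⟩

theorem chainInf_comp_le (hf : ∀ g, 0 ≤ f g) {g h : G} (hc : S.Composable g h) :
    S.chainInf f (S.comp g h) ≤ S.chainInf f g + S.chainInf f h := by
  refine le_of_forall_pos_lt_add fun ε hε => ?_
  obtain ⟨l₁, hl₁, hs₁⟩ := exists_isChainProd_of_chainInf_lt
    (show S.chainInf f g < S.chainInf f g + ε / 2 by linarith)
  obtain ⟨l₂, hl₂, hs₂⟩ := exists_isChainProd_of_chainInf_lt
    (show S.chainInf f h < S.chainInf f h + ε / 2 by linarith)
  have := chainInf_le hf (hl₁.append hl₂ hc)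
  rw [List.map_append, List.sum_append] at this
  linarith

section Topology

variable [TopologicalSpace G]

theorem IsChainProd.exists_isOpen_forall_exists_sum_lt (hTop : S.IsTopological) (hOpen : IsOpenMap S.src)
    (hf : UpperSemicontinuous f) {l : List G} {g : G} (hl : S.IsChainProd l g) {ε : ℝ}
    (hε : 0 < ε) :
    ∃ N : Set G, IsOpen N ∧ g ∈ N ∧
      ∀ k ∈ N, ∃ l', S.IsChainProd l' k ∧ (l'.map f).sum < (l.map f).sum + ε := by
  induction hl generalizing ε with
  | single a =>
    exact ⟨f ⁻¹' Iio (f a + ε), hf.isOpen_preimage _, by simpa using hε,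
      fun k hk => ⟨[k], .single k, by simpa using hk⟩⟩
  | @cons a g l hag _ ih =>
    obtain ⟨N, hN, hgN, hNl⟩ := ih (half_pos hε)
    refine ⟨S.setMul (f ⁻¹' Iio (f a + ε / 2)) N,
      S.isOpen_setMul hTop hOpen (hf.isOpen_preimage _) hN,
      S.mem_setMul (by simpa using half_pos hε) hgN hag, ?_⟩
    rintro _ ⟨a', ha', k, hk, hc, rfl⟩
    obtain ⟨l', hl', hs⟩ := hNl k hk
    refine ⟨a' :: l', .cons hc hl', ?_⟩
    simp only [mem_preimage, mem_Iio] at ha'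
    simp only [List.map_cons, List.sum_cons]
    linarith

theorem upperSemicontinuous_chainInf (hTop : S.IsTopological) (hOpen : IsOpenMap S.src)
    (hf₀ : ∀ g, 0 ≤ f g) (hf : UpperSemicontinuous f) : UpperSemicontinuous (S.chainInf f) := by
  intro g r hgr
  obtain ⟨l, hl, hlr⟩ := exists_isChainProd_of_chainInf_lt hgr
  obtain ⟨N, hN, hgN, hNl⟩ := hl.exists_isOpen_forall_exists_sum_lt hTop hOpen hf (sub_pos.2 hlr)
  filter_upwards [hN.mem_nhds hgN] with k hk
  obtain ⟨l', hl', hs⟩ := hNl k hk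
  linarith [chainInf_le hf₀ hl']

end Topology

end Groupoidal

namespace Groupoidal

variable {G : Type*} (S : Groupoidal G)

structure IsCubeShrinking (Z : ℕ → Set G) : Prop where
  unital : ∀ n, S.IsUnital (Z n)
  setMul_setMul_subset : ∀ n, S.setMul (Z (n + 1)) (S.setMul (Z (n + 1)) (Z (n + 1))) ⊆ Z n

variable {S} {Z : ℕ → Set G}

theorem IsCubeShrinking.antitone (hZ : S.IsCubeShrinking Z) : Antitone Z := by
  refine antitone_nat_of_succ_le fun n g hg => hZ.setMul_setMul_subset n ?_
  have hσ : S.src g ∈ Z (n + 1) := (hZ.unital (n + 1)).1 ⟨g, hg, rfl⟩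
  have := S.mem_setMul hg (S.mem_setMul hσ hσ (S.composable_src_src g))
    (by rw [S.comp_src_src]; exact S.composable_src g)
  rwa [S.comp_src_src, S.comp_src] at this

/-- Split the chain at a factor `x` where neither side carries more than half of the total; both
sides then land in `Z (n + 1)` by induction, and so does `x`. -/
theorem IsCubeShrinking.mem_of_isChainProd (hZ : S.IsCubeShrinking Z) {l : List G} {k : G}
    (hl : S.IsChainProd l k) {n : ℕ} (hs : (l.map (dyadicGauge Z)).sum < (2⁻¹ : ℝ) ^ n) :
    k ∈ Z n := by
  induction hlen : l.length using Nat.strong_induction_on generalizing l k n with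
  | _ m ih =>
  subst hlen
  set f := dyadicGauge Z
  have hf : ∀ l : List G, 0 ≤ (l.map f).sum := fun l =>
    List.sum_nonneg (by simpa using fun a _ => dyadicGauge_nonneg a)
  obtain ⟨l₁, x, l₂, rfl, h₁, h₂⟩ := List.exists_eq_append_cons_sum_le f hl.ne_nil
    (by linarith [hf l]) (half_le_self (hf l))
  have hsum : ((l₁ ++ x :: l₂).map f).sum = (l₁.map f).sum + f x + (l₂.map f).sum := by
    simp only [List.map_append, List.map_cons, List.sum_append, List.sum_cons]; ring
  have hhalf : ((l₁ ++ x :: l₂).map f).sum / 2 < (2⁻¹ : ℝ) ^ (n + 1) := by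
    rw [pow_succ]; linarith
  have hx : x ∈ Z (n + 1) :=
    mem_of_dyadicGauge_lt hZ.antitone (by linarith [hf l₁, hf l₂])
  obtain ⟨g, p, hg, hp, hgp, rfl⟩ := hl.exists_of_append (List.cons_ne_nil x l₂)
  obtain ⟨b, hb, hxb, rfl⟩ := hp.exists_of_cons
  have hgZ : g ∈ Z (n + 1) := by
    rcases hg with ⟨-, rfl⟩ | hg
    · rw [S.tgt_comp _ _ hxb]; exact (hZ.unital _).2 ⟨x, hx, rfl⟩
    · exact ih _ (by simp) hg (by linarith) rfl
  have hbZ : b ∈ Z (n + 1) := by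
    rcases hb with rfl | hb
    · exact (hZ.unital _).1 ⟨x, hx, rfl⟩
    · exact ih _ (by simp; omega) hb (by linarith) rfl
  exact hZ.setMul_setMul_subset n (S.mem_setMul hgZ (S.mem_setMul hx hbZ hxb) hgp)

theorem IsCubeShrinking.mem_of_chainInf_lt (hZ : S.IsCubeShrinking Z) {k : G} {n : ℕ}
    (hk : S.chainInf (dyadicGauge Z) k < (2⁻¹ : ℝ) ^ n) : k ∈ Z n := by
  obtain ⟨l, hl, hs⟩ := exists_isChainProd_of_chainInf_lt hk
  exact hZ.mem_of_isChainProd hl hs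

theorem chainInf_dyadicGauge_eq_zero {x : G} (hx : ∀ n, x ∈ Z n) :
    S.chainInf (dyadicGauge Z) x = 0 :=
  le_antisymm (ge_of_tendsto' (tendsto_pow_atTop_nhds_zero_of_lt_one (r := (2⁻¹ : ℝ))
      (by norm_num) (by norm_num)) fun n =>
        (chainInf_le_self dyadicGauge_nonneg x).trans (dyadicGauge_le (hx n)))
    (chainInf_nonneg dyadicGauge_nonneg x)

end Groupoidal

namespace Groupoidal

variable {G : Type*} [TopologicalSpace G] (S : Groupoidal G)

theorem exists_isOpen_setMul_setMul_subset (hTop : S.IsTopological) (hOpen : IsOpenMap S.src)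
    {V : Set G} (hVopen : IsOpen V) (hVunital : S.IsUnital V) [T2Space V] [ParacompactSpace V]
    {O : Set G} (hO : IsOpen O) (hVO : S.units ∩ V ⊆ O) :
    ∃ Z : Set G, IsOpen Z ∧ S.units ∩ V ⊆ Z ∧ (∀ g ∈ Z, S.src g ∈ V ∧ S.tgt g ∈ V) ∧
      S.setMul Z (S.setMul Z Z) ⊆ O := by
  obtain ⟨Z₁, hZ₁, hVZ₁, -, hZ₁O⟩ :=
    S.exists_isOpen_setMul_self_subset hTop hOpen hVopen hVunital hO hVO
  obtain ⟨Z₂, hZ₂, hVZ₂, hZ₂V, hZ₂Z₁⟩ :=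
    S.exists_isOpen_setMul_self_subset hTop hOpen hVopen hVunital hZ₁ hVZ₁
  have hZ₂sub : Z₂ ⊆ Z₁ := (S.subset_setMul_of_src_subset
    (S.isUnital_of_units_inter_subset hVZ₂ hZ₂V).1).trans hZ₂Z₁
  exact ⟨Z₂, hZ₂, hVZ₂, hZ₂V, (S.setMul_mono hZ₂sub hZ₂Z₁).trans hZ₁O⟩

theorem exists_isCubeShrinking (hTop : S.IsTopological) (hOpen : IsOpenMap S.src)
    {V : Set G} (hVopen : IsOpen V) (hVunital : S.IsUnital V) [T2Space V] [ParacompactSpace V]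
    {U : G → ℝ} (hU : UpperSemicontinuous U) (hVU : S.units ∩ V ⊆ {g | U g = 0}) :
    ∃ Z : ℕ → Set G, S.IsCubeShrinking Z ∧ (∀ n, IsOpen (Z n)) ∧
      (∀ n, S.units ∩ V ⊆ Z n) ∧ (∀ n, ∀ g ∈ Z n, S.src g ∈ V ∧ S.tgt g ∈ V) ∧
      ∀ n, ∀ g ∈ Z n, U g < (2⁻¹ : ℝ) ^ (n + 1) := by
  choose! T hT hVT hTV hTO using fun (O : Set G) (hO : IsOpen O) (hVO : S.units ∩ V ⊆ O) =>
    S.exists_isOpen_setMul_setMul_subset hTop hOpen hVopen hVunital hO hVO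
  have hVU' : ∀ n : ℕ, S.units ∩ V ⊆ {g | U g < (2⁻¹ : ℝ) ^ (n + 1)} := fun n x hx =>
    show U x < _ by rw [show U x = 0 from hVU hx]; positivity
  -- `Y (n + 1)` is the `n`-th set of the sequence; `Y 0 = univ` only starts the recursion.
  let Y : ℕ → Set G := fun n =>
    Nat.rec univ (fun n Yn => T (Yn ∩ {g | U g < (2⁻¹ : ℝ) ^ (n + 1)})) n
  have hY : ∀ n, IsOpen (Y n) ∧ S.units ∩ V ⊆ Y n := by
    intro n
    induction n with
    | zero => exact ⟨isOpen_univ, subset_univ _⟩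
    | succ n ih =>
      exact ⟨hT _ (ih.1.inter (hU.isOpen_preimage _)) (subset_inter ih.2 (hVU' n)),
        hVT _ (ih.1.inter (hU.isOpen_preimage _)) (subset_inter ih.2 (hVU' n))⟩
  have hOn : ∀ n, IsOpen (Y n ∩ {g | U g < (2⁻¹ : ℝ) ^ (n + 1)}) := fun n =>
    (hY n).1.inter (hU.isOpen_preimage _)
  have hVOn : ∀ n, S.units ∩ V ⊆ Y n ∩ {g | U g < (2⁻¹ : ℝ) ^ (n + 1)} := fun n =>
    subset_inter (hY n).2 (hVU' n)
  have hunital : ∀ n, S.IsUnital (Y (n + 1)) := fun n =>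
    S.isUnital_of_units_inter_subset (hVT _ (hOn n) (hVOn n)) (hTV _ (hOn n) (hVOn n))
  have hcube : ∀ n, S.setMul (Y (n + 1)) (S.setMul (Y (n + 1)) (Y (n + 1))) ⊆
      Y n ∩ {g | U g < (2⁻¹ : ℝ) ^ (n + 1)} := fun n => hTO _ (hOn n) (hVOn n)
  have hsub : ∀ n, Y (n + 1) ⊆ Y n ∩ {g | U g < (2⁻¹ : ℝ) ^ (n + 1)} := fun n =>
    (S.subset_setMul_of_src_subset (hunital n).1).trans
      ((S.setMul_mono subset_rfl (S.subset_setMul_of_src_subset (hunital n).1)).trans (hcube n))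
  exact ⟨fun n => Y (n + 1), ⟨hunital, fun n => (hcube (n + 1)).trans inter_subset_left⟩,
    fun n => (hY (n + 1)).1, fun n => (hY (n + 1)).2, fun n => hTV _ (hOn n) (hVOn n),
    fun n g hg => (hsub n hg).2⟩

end Groupoidal

namespace Groupoidal

variable {G : Type*} (S : Groupoidal G)

noncomputable def symmTrunc (d : G → ℝ) (g : G) : ℝ :=
  max (min 1 (d g)) (min 1 (d (S.inv g)))

variable {S} {d : G → ℝ}

theorem symmTrunc_of_mem_units {x : G} (hx : x ∈ S.units) : S.symmTrunc d x = min 1 (d x) := by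
  simp [symmTrunc, S.inv_eq_self_of_mem_units hx]

theorem upperSemicontinuous_symmTrunc [TopologicalSpace G] (hTop : S.IsTopological)
    (hd : UpperSemicontinuous d) : UpperSemicontinuous (S.symmTrunc d) :=
  (continuous_const.upperSemicontinuous.inf hd).sup
    ((continuous_const.upperSemicontinuous.inf hd).comp hTop.continuous_inv)

theorem isStrictGreySubgroupoid_symmTrunc (hd₀ : ∀ g, 0 ≤ d g)
    (hd_comp : ∀ g h, S.Composable g h → d (S.comp g h) ≤ d g + d h)
    (hd_lt_one : ∀ g, d g < 1 → d (S.src g) = 0 ∧ d (S.tgt g) = 0) :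
    S.IsStrictGreySubgroupoid (S.symmTrunc d) := by
  have hmin : ∀ g h, S.Composable g h →
      min 1 (d (S.comp g h)) ≤ min 1 (min 1 (d g) + min 1 (d h)) := fun g h hc =>
    (min_le_min_left 1 (hd_comp g h hc)).trans (min_one_add_le (hd₀ g) (hd₀ h))
  refine ⟨fun g => ⟨le_max_of_le_left (le_min zero_le_one (hd₀ g)),
      max_le (min_le_left _ _) (min_le_left _ _)⟩, fun x hx => ?_, fun g hg => ?_,
    fun g => by simp only [symmTrunc, S.inv_inv, max_comm], fun g h hc => ?_⟩
  · rw [symmTrunc_of_mem_units hx]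
    by_cases hx1 : d x < 1
    · have := (hd_lt_one x hx1).1
      rw [show S.src x = x from hx] at this
      simp [this]
    · simp [not_lt.1 hx1]
  · have hg1 : d g < 1 := (min_lt_iff.1 ((le_max_left _ _).trans_lt hg)).resolve_left
      (lt_irrefl 1)
    rw [symmTrunc_of_mem_units (S.src_src g), symmTrunc_of_mem_units (S.src_of_tgt g),
      (hd_lt_one g hg1).1, (hd_lt_one g hg1).2]
    simp
  · have hc' : S.Composable (S.inv h) (S.inv g) := by
      rw [Composable, S.src_inv, S.tgt_inv, hc]
    refine max_le ((hmin g h hc).trans (min_le_min_left 1 (add_le_add (le_max_left _ _)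
      (le_max_left _ _)))) ?_
    rw [S.inv_comp hc, add_comm]
    exact (hmin _ _ hc').trans (min_le_min_left 1 (add_le_add (le_max_right _ _)
      (le_max_right _ _)))

end Groupoidal

/-- **Birkhoff–Kakutani metrization for locally paracompact open topological
groupoids.** -/
theorem birkhoff_kakutani_groupoid {G : Type*} [TopologicalSpace G]
    (S : Groupoidal G) (hTop : S.IsTopological) (hOpen : IsOpenMap S.src)
    (U : G → ℝ) (hU01 : ∀ g, U g ∈ Set.Icc (0 : ℝ) 1) (hUopen : GreyOpen U)
    (V : Set G) (hVopen : IsOpen V) (hVunital : S.IsUnital V)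
    (hT2 : T2Space ↥V) (hPara : ParacompactSpace ↥V)
    (hVU : S.units ∩ V ⊆ {g | U g = 0}) :
    ∃ W : G → ℝ, (∀ g, W g ∈ Set.Icc (0 : ℝ) 1) ∧ GreyOpen W ∧
      S.IsStrictGreySubgroupoid W ∧ (∀ g, U g ≤ W g) ∧
      S.units ∩ {x | W x = 0} = S.units ∩ V := by
  obtain ⟨Z, hZ, hZopen, hVZ, hZV, hZU⟩ := S.exists_isCubeShrinking hTop hOpen hVopen hVunital
    (greyOpen_iff_upperSemicontinuous.1 hUopen) hVU
  set d := S.chainInf (dyadicGauge Z)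
  have hd₀ : ∀ g, 0 ≤ d g := Groupoidal.chainInf_nonneg dyadicGauge_nonneg
  have hd_usc : UpperSemicontinuous d := Groupoidal.upperSemicontinuous_chainInf hTop hOpen
    dyadicGauge_nonneg (upperSemicontinuous_dyadicGauge hZopen)
  have hd_zero : ∀ x ∈ S.units ∩ V, d x = 0 := fun x hx =>
    Groupoidal.chainInf_dyadicGauge_eq_zero fun n => hVZ n hx
  have hdV : ∀ g, d g < 1 → S.src g ∈ V ∧ S.tgt g ∈ V := fun g hg =>
    hZV 0 g (hZ.mem_of_chainInf_lt (by simpa using hg))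
  have hUd : ∀ g, U g ≤ d g := fun g => le_of_forall_lt_two_inv_pow (hd₀ g) (hU01 g).2
    fun n hn => hZU n g (hZ.mem_of_chainInf_lt hn)
  have hW := Groupoidal.isStrictGreySubgroupoid_symmTrunc hd₀
    (fun g h => Groupoidal.chainInf_comp_le dyadicGauge_nonneg) fun g hg =>
      ⟨hd_zero _ ⟨S.src_src g, (hdV g hg).1⟩, hd_zero _ ⟨S.src_of_tgt g, (hdV g hg).2⟩⟩
  refine ⟨S.symmTrunc d, hW.1, greyOpen_iff_upperSemicontinuous.2
    (Groupoidal.upperSemicontinuous_symmTrunc hTop hd_usc), hW,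
    fun g => le_max_of_le_left (le_min (hU01 g).2 (hUd g)), ?_⟩
  ext x
  refine and_congr_right fun hx => ?_
  change S.symmTrunc d x = 0 ↔ x ∈ V
  rw [Groupoidal.symmTrunc_of_mem_units hx]
  refine ⟨fun h0 => ?_, fun hxV => by simp [hd_zero x ⟨hx, hxV⟩]⟩
  have hx1 : d x < 1 := (min_lt_iff.1 (h0 ▸ zero_lt_one)).resolve_left (lt_irrefl 1)
  exact (show S.src x = x from hx) ▸ (hdV x hx1).1
end

section
/- Let X, Y be metric spaces of diameter ≤ 1 and g : E(X) → E(Y) an isometric bijection with g(δ_X(X)) = δ_Y(Y). Then there is a unique isometric bijection f : X → Y such that g = E(f). -/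
open Set Metric

/-- A Katětov function on a (pseudo)metric space `W` (of diameter ≤ 1):
a 1-Lipschitz function into `[0,1]` with `d(z,w) ≤ u(z) + u(w)`. -/
def IsKatetov {W : Type*} [PseudoMetricSpace W]
    (u : BoundedContinuousFunction W ℝ) : Prop :=
  (∀ z, u z ∈ Set.Icc (0 : ℝ) 1) ∧
  (∀ z w, |u z - u w| ≤ dist z w) ∧
  (∀ z w, dist z w ≤ u z + u w)

/-- The space `E(W)` of Katětov functions on `W`, with the sup metric
(inherited from the space of bounded continuous functions). -/
abbrev KatE (W : Type*) [PseudoMetricSpace W] : Type _ :=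
  {u : BoundedContinuousFunction W ℝ // IsKatetov u}

/-- The canonical isometric embedding `δ_X : X → E(X)`, `x ↦ d(x,·)`,
described via its image: `v = δ_X x` iff `v = d(x,·)` pointwise. -/
def IsDelta {X : Type*} [MetricSpace X] (x : X) (v : KatE X) : Prop :=
  ∀ y : X, v.val y = dist x y

/-!
An isometry `g : E(X) → E(Y)` carrying `δ_X(X)` onto `δ_Y(Y)` induces a surjective isometry
`f : X → Y` by `g (δ_X x) = δ_Y (f x)`. Since `d(u, δ_X x) = u(x)` for every Katětov function
`u`, isometry of `g` gives `g(u)(f x) = u(x)`; and since `u` is 1-Lipschitz and bounded by 1, the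
infimum defining `E(f)(u)` at `f x` is attained at `x`, so it is `u(x)` too. Uniqueness: evaluate
`g (δ_X x) = E(f')(δ_X x)` at `f' x`.
-/

namespace KatE

section PseudoMetric

variable {X : Type*} [PseudoMetricSpace X]

lemma nonneg (u : KatE X) (x : X) : 0 ≤ u.val x := (u.2.1 x).1

lemma le_one (u : KatE X) (x : X) : u.val x ≤ 1 := (u.2.1 x).2

lemma le_dist_add (u : KatE X) (x x' : X) : u.val x ≤ dist x x' + u.val x' := by
  linarith [(abs_le.mp (u.2.2.1 x x')).2]

lemma dist_le_add (u : KatE X) (x x' : X) : dist x x' ≤ u.val x + u.val x' := u.2.2.2 x x'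

noncomputable def delta (hd : ∀ x x' : X, dist x x' ≤ 1) (x : X) : KatE X :=
  ⟨.mkOfBound ⟨dist x, continuous_const.dist continuous_id⟩ 1 fun a b =>
      Real.dist_le_of_mem_Icc_01 ⟨dist_nonneg, hd x a⟩ ⟨dist_nonneg, hd x b⟩,
    fun z => ⟨dist_nonneg, hd x z⟩,
    fun z w => show |dist x z - dist x w| ≤ dist z w by
      simpa only [dist_comm x] using abs_dist_sub_le z w x,
    fun z w => show dist z w ≤ dist x z + dist x w by
      simpa only [dist_comm x z] using dist_triangle z x w⟩

@[simp]
lemma delta_apply (hd : ∀ x x' : X, dist x x' ≤ 1) (x z : X) : (delta hd x).val z = dist x z :=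
  rfl

lemma dist_delta (hd : ∀ x x' : X, dist x x' ≤ 1) (u : KatE X) (x : X) :
    dist u (delta hd x) = u.val x := by
  apply le_antisymm
  · refine (BoundedContinuousFunction.dist_le (u.nonneg x)).mpr fun z => ?_
    rw [Real.dist_eq, delta_apply, abs_sub_le_iff]
    constructor
    · linarith [u.le_dist_add z x, dist_comm x z]
    · linarith [u.dist_le_add x z]
  · have h := BoundedContinuousFunction.dist_coe_le_dist (f := u.val) (g := (delta hd x).val) x
    rwa [delta_apply, dist_self, Real.dist_eq, sub_zero, abs_of_nonneg (u.nonneg x)] at h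

lemma isometry_delta (hd : ∀ x x' : X, dist x x' ≤ 1) : Isometry (delta hd) :=
  Isometry.of_dist_eq fun x x' => by rw [dist_delta, delta_apply]

lemma iInf_min_dist_add_le {Y : Type*} [PseudoMetricSpace Y] (f : X → Y) (u : KatE X) (y : Y)
    (x : X) : ⨅ x', min 1 (dist y (f x') + u.val x') ≤ dist y (f x) + u.val x := by
  refine (ciInf_le ⟨0, ?_⟩ x).trans (min_le_right _ _)
  rintro _ ⟨x', rfl⟩
  exact le_min zero_le_one (add_nonneg dist_nonneg (u.nonneg x'))

lemma iInf_min_dist_add_of_isometry {Y : Type*} [PseudoMetricSpace Y] {f : X → Y}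
    (hf : Isometry f) (u : KatE X) (x : X) :
    ⨅ x', min 1 (dist (f x) (f x') + u.val x') = u.val x := by
  have : Nonempty X := ⟨x⟩
  refine le_antisymm (by simpa using iInf_min_dist_add_le f u (f x) x)
    (le_ciInf fun x' => le_min (u.le_one x) ?_)
  rw [hf.dist_eq]
  exact u.le_dist_add x x'

end PseudoMetric

section Metric

variable {X Y : Type*} [MetricSpace X] [MetricSpace Y]

lemma isDelta_delta (hd : ∀ x x' : X, dist x x' ≤ 1) (x : X) : IsDelta x (delta hd x) :=
  fun _ => rfl

lemma eq_delta_of_isDelta (hd : ∀ x x' : X, dist x x' ≤ 1) {x : X} {v : KatE X}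
    (h : IsDelta x v) : v = delta hd x :=
  Subtype.ext (BoundedContinuousFunction.ext h)

variable (hdX : ∀ x x' : X, dist x x' ≤ 1) (hdY : ∀ y y' : Y, dist y y' ≤ 1)
  {g : KatE X → KatE Y}
  (hgdelta : g '' {v | ∃ x : X, IsDelta x v} = {w | ∃ y : Y, IsDelta y w})
include hdX hdY hgdelta

lemma exists_map_delta_eq_delta (x : X) : ∃ y, g (delta hdX x) = delta hdY y := by
  obtain ⟨y, hy⟩ : g (delta hdX x) ∈ {w | ∃ y : Y, IsDelta y w} :=
    hgdelta ▸ mem_image_of_mem g ⟨x, isDelta_delta hdX x⟩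
  exact ⟨y, eq_delta_of_isDelta hdY hy⟩

noncomputable def baseMap (x : X) : Y := (exists_map_delta_eq_delta hdX hdY hgdelta x).choose

lemma map_delta (x : X) : g (delta hdX x) = delta hdY (baseMap hdX hdY hgdelta x) :=
  (exists_map_delta_eq_delta hdX hdY hgdelta x).choose_spec

lemma surjective_baseMap : Function.Surjective (baseMap hdX hdY hgdelta) := by
  intro y
  obtain ⟨v, ⟨x, hx⟩, hv⟩ : delta hdY y ∈ g '' {v | ∃ x : X, IsDelta x v} :=
    hgdelta ▸ ⟨y, isDelta_delta hdY y⟩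
  refine ⟨x, (isometry_delta hdY).injective ?_⟩
  rw [← map_delta, ← eq_delta_of_isDelta hdX hx, hv]

lemma eq_baseMap_of_apply_eq_iInf {f : X → Y}
    (hf : ∀ (u : KatE X) (y : Y), (g u).val y = ⨅ x : X, min 1 (dist y (f x) + u.val x)) :
    f = baseMap hdX hdY hgdelta := by
  funext x
  refine (dist_le_zero.mp ?_).symm
  calc dist (baseMap hdX hdY hgdelta x) (f x) = (g (delta hdX x)).val (f x) := by
        rw [map_delta hdX hdY hgdelta, delta_apply]
    _ ≤ dist (f x) (f x) + (delta hdX x).val x := hf _ _ ▸ iInf_min_dist_add_le f _ _ x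
    _ = 0 := by simp

variable (hgiso : ∀ u v : KatE X, dist (g u) (g v) = dist u v)
include hgiso

lemma isometry_baseMap : Isometry (baseMap hdX hdY hgdelta) :=
  Isometry.of_dist_eq fun x x' => by
    rw [← (isometry_delta hdY).dist_eq, ← map_delta, ← map_delta, hgiso,
      (isometry_delta hdX).dist_eq]

lemma apply_baseMap (u : KatE X) (x : X) : (g u).val (baseMap hdX hdY hgdelta x) = u.val x := by
  rw [← dist_delta hdY, ← map_delta, hgiso, dist_delta]

lemma apply_eq_iInf_baseMap (u : KatE X) (y : Y) :
    (g u).val y = ⨅ x : X, min 1 (dist y (baseMap hdX hdY hgdelta x) + u.val x) := by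
  obtain ⟨x, rfl⟩ := surjective_baseMap hdX hdY hgdelta y
  rw [apply_baseMap hdX hdY hgdelta hgiso,
    iInf_min_dist_add_of_isometry (isometry_baseMap hdX hdY hgdelta hgiso)]

end Metric

end KatE

theorem katetov_functor_faithful_general {X Y : Type*} [MetricSpace X] [MetricSpace Y]
    (hdX : ∀ x x' : X, dist x x' ≤ 1) (hdY : ∀ y y' : Y, dist y y' ≤ 1)
    (g : KatE X → KatE Y) (hgiso : ∀ u v : KatE X, dist (g u) (g v) = dist u v)
    (hgdelta : g '' {v | ∃ x : X, IsDelta x v} = {w | ∃ y : Y, IsDelta y w}) :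
    ∃! f : X → Y, Isometry f ∧ Function.Bijective f ∧
      ∀ (u : KatE X) (y : Y),
        (g u).val y = ⨅ x : X, min 1 (dist y (f x) + u.val x) := by
  have hiso := KatE.isometry_baseMap hdX hdY hgdelta hgiso
  refine ⟨KatE.baseMap hdX hdY hgdelta, ⟨hiso, ⟨hiso.injective, ?_⟩, ?_⟩, ?_⟩
  · exact KatE.surjective_baseMap hdX hdY hgdelta
  · exact KatE.apply_eq_iInf_baseMap hdX hdY hgdelta hgiso
  · exact fun f ⟨_, _, hf⟩ => KatE.eq_baseMap_of_apply_eq_iInf hdX hdY hgdelta hf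

/-- If `X, Y` are metric spaces of diameter ≤ 1 and `g : E(X) → E(Y)` is an
isometric bijection with `g(δ_X(X)) = δ_Y(Y)`, then there is a unique
isometric bijection `f : X → Y` with `g = E(f)`, where
`E(f)(u) = (y ↦ inf_x min(1, d(y, f x) + u(x)))`. -/
theorem katetov_functor_faithful {X Y : Type*} [MetricSpace X] [MetricSpace Y]
    (hdX : ∀ x x' : X, dist x x' ≤ 1) (hdY : ∀ y y' : Y, dist y y' ≤ 1)
    (g : KatE X → KatE Y) (hgiso : ∀ u v : KatE X, dist (g u) (g v) = dist u v)
    (hgbij : Function.Bijective g)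
    (hgdelta : g '' {v | ∃ x : X, IsDelta x v} = {w | ∃ y : Y, IsDelta y w}) :
    ∃! f : X → Y, Isometry f ∧ Function.Bijective f ∧
      ∀ (u : KatE X) (y : Y),
        (g u).val y = ⨅ x : X, min 1 (dist y (f x) + u.val x) :=
  katetov_functor_faithful_general hdX hdY g hgiso hgdelta
end
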